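/- Let D and D' be multisets of size n over X × Y differing by replacing one pair. Let P_D, P_{D'} be the empirical joint distributions, and let P_D^X, P_D^Y (resp. for D') be the marginal empirical distributions. Then |TVD(P_{D'}, P_{D'}^X ⊗ P_{D'}^Y) − TVD(P_D, P_D^X ⊗ P_D^Y)| ≤ 3/n, where (P ⊗ Q)(x,y) = P(x)Q(y). -/

import Mathlib

open Finset

noncomputable section

/-- Empirical joint distribution of a multiset of pairs. -/
def empJoint {X Y : Type*} [DecidableEq X] [DecidableEq Y]
    (D : Multiset (X × Y)) (n : ℕ) (p : X × Y) : ℝ :=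
  (D.count p : ℝ) / n

/-- Empirical marginal on `X`. -/
def empMargX {X Y : Type*} [Fintype Y] [DecidableEq X] [DecidableEq Y]
    (D : Multiset (X × Y)) (n : ℕ) (x : X) : ℝ :=
  ∑ y : Y, empJoint D n (x, y)

/-- Empirical marginal on `Y`. -/
def empMargY {X Y : Type*} [Fintype X] [DecidableEq X] [DecidableEq Y]
    (D : Multiset (X × Y)) (n : ℕ) (y : Y) : ℝ :=
  ∑ x : X, empJoint D n (x, y)

/-- TVD between the empirical joint distribution and the product of its
marginals. -/
def tvdJointProd {X Y : Type*} [Fintype X] [Fintype Y] [DecidableEq X]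
    [DecidableEq Y] (D : Multiset (X × Y)) (n : ℕ) : ℝ :=
  (1 / 2) * ∑ p : X × Y,
    |empJoint D n p - empMargX D n p.1 * empMargY D n p.2|

/-!
Replacing one pair changes one count down and one count up by `1`, so the joint distribution
moves by at most `2/n` in `ℓ¹`, and so does each marginal (marginalising is an `ℓ¹`
contraction). Writing `a'b' - ab = (a' - a) b' + a (b' - b)` with probability vectors `a`, `b'`
shows that the product of the marginals moves by at most `4/n`. The TVD is half an `ℓ¹`
distance, so by the reverse triangle inequality it moves by at most `(2/n + 4/n) / 2 = 3/n`.
-/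

/- `s' + {a} = s + {b}` says that `s'` arises from `s` by replacing one copy of `a` with `b`. -/
theorem Multiset.card_eq_of_add_singleton_eq {α : Type*} {s s' : Multiset α} {a b : α}
    (h : s' + {a} = s + {b}) : Multiset.card s' = Multiset.card s := by
  simpa using congrArg Multiset.card h

theorem Multiset.sum_abs_count_sub_count_le_two {α : Type*} [Fintype α] [DecidableEq α]
    {s s' : Multiset α} {a b : α} (h : s' + {a} = s + {b}) :
    ∑ p, |(s'.count p : ℝ) - s.count p| ≤ 2 := by
  have hcount (p : α) :
      (s'.count p : ℝ) - s.count p = (if p = b then 1 else 0) - (if p = a then 1 else 0) := by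
    have := congrArg (fun m : Multiset α => (m.count p : ℝ)) h
    simp only [Multiset.count_add, Multiset.count_singleton, Nat.cast_add, Nat.cast_ite,
      Nat.cast_one, Nat.cast_zero] at this
    linarith
  calc ∑ p, |(s'.count p : ℝ) - s.count p|
      ≤ ∑ p, ((if p = b then 1 else 0) + (if p = a then 1 else 0) : ℝ) := by
        gcongr with p
        rw [hcount]
        split_ifs <;> norm_num
    _ = 2 := by
        rw [Finset.sum_add_distrib, Finset.sum_ite_eq', Finset.sum_ite_eq']
        norm_num

theorem Finset.abs_sum_abs_sub_sum_abs_le {ι : Type*} (s : Finset ι) (f g : ι → ℝ) :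
    |(∑ i ∈ s, |f i|) - (∑ i ∈ s, |g i|)| ≤ ∑ i ∈ s, |f i - g i| := by
  rw [← Finset.sum_sub_distrib]
  exact (Finset.abs_sum_le_sum_abs _ _).trans
    (Finset.sum_le_sum fun i _ => abs_abs_sub_abs_le_abs_sub _ _)

theorem Fintype.sum_abs_sum_sub_sum_le_fst {X Y : Type*} [Fintype X] [Fintype Y]
    (f g : X × Y → ℝ) :
    ∑ x, |(∑ y, f (x, y)) - ∑ y, g (x, y)| ≤ ∑ p, |f p - g p| := by
  rw [Fintype.sum_prod_type]
  gcongr with x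
  rw [← Finset.sum_sub_distrib]
  exact Finset.abs_sum_le_sum_abs _ _

theorem Fintype.sum_abs_sum_sub_sum_le_snd {X Y : Type*} [Fintype X] [Fintype Y]
    (f g : X × Y → ℝ) :
    ∑ y, |(∑ x, f (x, y)) - ∑ x, g (x, y)| ≤ ∑ p, |f p - g p| := by
  rw [Fintype.sum_prod_type_right]
  gcongr with y
  rw [← Finset.sum_sub_distrib]
  exact Finset.abs_sum_le_sum_abs _ _

theorem Fintype.sum_abs_mul_sub_mul_le {X Y : Type*} [Fintype X] [Fintype Y]
    (a a' : X → ℝ) (b b' : Y → ℝ) (ha : ∀ x, 0 ≤ a x) (hb' : ∀ y, 0 ≤ b' y) :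
    ∑ p : X × Y, |a' p.1 * b' p.2 - a p.1 * b p.2|
      ≤ (∑ x, |a' x - a x|) * ∑ y, b' y + (∑ x, a x) * ∑ y, |b' y - b y| := by
  calc ∑ p : X × Y, |a' p.1 * b' p.2 - a p.1 * b p.2|
      ≤ ∑ p : X × Y, (|a' p.1 - a p.1| * b' p.2 + a p.1 * |b' p.2 - b p.2|) := by
        gcongr with p
        have hsplit : a' p.1 * b' p.2 - a p.1 * b p.2
            = (a' p.1 - a p.1) * b' p.2 + a p.1 * (b' p.2 - b p.2) := by ring
        rw [hsplit]
        refine (abs_add_le _ _).trans_eq ?_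
        rw [abs_mul, abs_mul, abs_of_nonneg (hb' _), abs_of_nonneg (ha _)]
    _ = (∑ x, |a' x - a x|) * ∑ y, b' y + (∑ x, a x) * ∑ y, |b' y - b y| := by
        simp only [Finset.sum_add_distrib, Fintype.sum_prod_type, Fintype.sum_mul_sum]

section Empirical

variable {X Y : Type*} [DecidableEq X] [DecidableEq Y]

theorem empJoint_nonneg (D : Multiset (X × Y)) (n : ℕ) (p : X × Y) : 0 ≤ empJoint D n p := by
  unfold empJoint
  positivity

theorem empMargX_nonneg [Fintype Y] (D : Multiset (X × Y)) (n : ℕ) (x : X) :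
    0 ≤ empMargX D n x :=
  Finset.sum_nonneg fun _ _ => empJoint_nonneg _ _ _

theorem empMargY_nonneg [Fintype X] (D : Multiset (X × Y)) (n : ℕ) (y : Y) :
    0 ≤ empMargY D n y :=
  Finset.sum_nonneg fun _ _ => empJoint_nonneg _ _ _

variable [Fintype X] [Fintype Y]

theorem sum_empJoint (D : Multiset (X × Y)) (n : ℕ) :
    ∑ p, empJoint D n p = Multiset.card D / n := by
  simp only [empJoint, ← Finset.sum_div, ← Nat.cast_sum,
    Multiset.sum_count_eq_card fun p _ => Finset.mem_univ p]

theorem sum_empMargX_le_one {D : Multiset (X × Y)} {n : ℕ} (hD : Multiset.card D = n) :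
    ∑ x, empMargX D n x ≤ 1 := by
  have hsum := sum_empJoint D n
  rw [Fintype.sum_prod_type, hD] at hsum
  simp only [empMargX, hsum]
  exact div_self_le_one _

theorem sum_empMargY_le_one {D : Multiset (X × Y)} {n : ℕ} (hD : Multiset.card D = n) :
    ∑ y, empMargY D n y ≤ 1 := by
  have hsum := sum_empJoint D n
  rw [Fintype.sum_prod_type_right, hD] at hsum
  simp only [empMargY, hsum]
  exact div_self_le_one _

theorem sum_abs_empJoint_sub_le {D D' : Multiset (X × Y)} {t t' : X × Y}
    (h : D' + {t} = D + {t'}) (n : ℕ) :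
    ∑ p, |empJoint D' n p - empJoint D n p| ≤ 2 / n := by
  simp only [empJoint, ← sub_div, abs_div, Nat.abs_cast, ← Finset.sum_div]
  exact div_le_div_of_nonneg_right (Multiset.sum_abs_count_sub_count_le_two h) n.cast_nonneg

theorem sum_abs_empMargX_sub_le {D D' : Multiset (X × Y)} {t t' : X × Y}
    (h : D' + {t} = D + {t'}) (n : ℕ) :
    ∑ x, |empMargX D' n x - empMargX D n x| ≤ 2 / n :=
  (Fintype.sum_abs_sum_sub_sum_le_fst _ _).trans (sum_abs_empJoint_sub_le h n)

theorem sum_abs_empMargY_sub_le {D D' : Multiset (X × Y)} {t t' : X × Y}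
    (h : D' + {t} = D + {t'}) (n : ℕ) :
    ∑ y, |empMargY D' n y - empMargY D n y| ≤ 2 / n :=
  (Fintype.sum_abs_sum_sub_sum_le_snd _ _).trans (sum_abs_empJoint_sub_le h n)

theorem sum_abs_empMarg_mul_sub_le {D D' : Multiset (X × Y)} {t t' : X × Y} {n : ℕ}
    (h : D' + {t} = D + {t'}) (hD : Multiset.card D = n) :
    ∑ p : X × Y, |empMargX D' n p.1 * empMargY D' n p.2 - empMargX D n p.1 * empMargY D n p.2|
      ≤ 4 / n := by
  have hD' : Multiset.card D' = n := (Multiset.card_eq_of_add_singleton_eq h).trans hD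
  calc _ ≤ (∑ x, |empMargX D' n x - empMargX D n x|) * ∑ y, empMargY D' n y
          + (∑ x, empMargX D n x) * ∑ y, |empMargY D' n y - empMargY D n y| :=
        Fintype.sum_abs_mul_sub_mul_le _ _ _ _ (empMargX_nonneg D n) (empMargY_nonneg D' n)
    _ ≤ 2 / n * 1 + 1 * (2 / n) := by
        gcongr
        · exact Finset.sum_nonneg fun y _ => empMargY_nonneg D' n y
        · exact sum_abs_empMargX_sub_le h n
        · exact sum_empMargY_le_one hD'
        · exact sum_empMargX_le_one hD
        · exact sum_abs_empMargY_sub_le h n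
    _ = 4 / n := by ring

theorem abs_tvdJointProd_sub_le (D D' : Multiset (X × Y)) (n : ℕ) :
    |tvdJointProd D' n - tvdJointProd D n|
      ≤ (∑ p, |empJoint D' n p - empJoint D n p|
        + ∑ p : X × Y, |empMargX D' n p.1 * empMargY D' n p.2
            - empMargX D n p.1 * empMargY D n p.2|) / 2 := by
  unfold tvdJointProd
  rw [← mul_sub, abs_mul, abs_of_pos one_half_pos, ← Finset.sum_add_distrib, one_div_mul_eq_div]
  gcongr
  refine (Finset.abs_sum_abs_sub_sum_abs_le _ _ _).trans (Finset.sum_le_sum fun p _ => ?_)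
  rw [sub_sub_sub_comm]
  exact abs_sub _ _

end Empirical

theorem tvd_joint_prod_sensitivity_general {X Y : Type*} [Fintype X] [Fintype Y]
    [DecidableEq X] [DecidableEq Y]
    (D D' : Multiset (X × Y)) (n : ℕ)
    (hcard : Multiset.card D = n)
    (t' t'' : X × Y) (ht' : t' ∈ D)
    (hD' : D' = (D.erase t') + {t''}) :
    |tvdJointProd D' n - tvdJointProd D n| ≤ 3 / n := by
  have hswap : D' + {t'} = D + {t''} := by
    rw [hD', add_right_comm, add_comm (D.erase t'), Multiset.singleton_add,
      Multiset.cons_erase ht']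
  calc |tvdJointProd D' n - tvdJointProd D n|
      ≤ (2 / n + 4 / n) / 2 := by
        refine (abs_tvdJointProd_sub_le D D' n).trans ?_
        gcongr
        · exact sum_abs_empJoint_sub_le hswap n
        · exact sum_abs_empMarg_mul_sub_le hswap hcard
    _ = 3 / n := by ring

/-- Replacing one pair in a multiset of size `n` changes the TVD between the
empirical joint distribution and the product of its marginals by at most
`3/n`. -/
theorem tvd_joint_prod_sensitivity {X Y : Type*} [Fintype X] [Fintype Y]
    [DecidableEq X] [DecidableEq Y]
    (D D' : Multiset (X × Y)) (n : ℕ) (hn : 1 ≤ n)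
    (hcard : Multiset.card D = n)
    (t' t'' : X × Y) (ht' : t' ∈ D)
    (hD' : D' = (D.erase t') + {t''}) :
    |tvdJointProd D' n - tvdJointProd D n| ≤ 3 / n :=
  tvd_joint_prod_sensitivity_general D D' n hcard t' t'' ht' hD'

end
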